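/- Hockey-stick divergence under local depolarizing noise: let D_p be the depolarizing channel on a D-dimensional system with parameter 0 ≤ p ≤ 1 and consider its k-fold tensor power D_p^{⊗k} acting on k subsystems. Then for all density operators ρ, σ on the D^k-dimensional composite system and all γ ≥ 1, E_γ(D_p^{⊗k}(ρ) ‖ D_p^{⊗k}(σ)) ≤ max{0, (1−γ)·p^k/D^k + (1 − p^k)·E_γ(ρ‖σ)}, and consequently η_γ(D_p^{⊗k}) ≤ max{0, (1−γ)·p^k/D^k + (1 − p^k)}. -/

import Mathlib

/-
Write `Δ = ρ - γσ`, so that `E_γ(ρ‖σ) = Tr Δ₊` and `Tr Δ = 1 - γ`. Since `Tr X₊` is the maximum of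
`Re Tr (P X)` over `0 ≤ P ≤ 1`, attained at the spectral projection onto the positive eigenspaces,
`X ↦ Tr X₊` is convex and positively homogeneous, and writing `X = X₊ - X₋` shows that it does not
increase under positive trace-preserving maps. Each single-site channel is `(1 - p) id + p R_j`,
with `R_j` the completely depolarizing channel on site `j`; peeling off one factor at a time gives
`D_p^{⊗k}(Δ) = p^k R(Δ) + B` with `Tr B₊ ≤ (1 - p^k) Tr Δ₊`, where `R = R_1 ⋯ R_k` sends `Δ` to
`(Tr Δ / D^k) I`. Adding the nonpositive multiple `(1 - γ) p^k / D^k` of the identity to `B` lowers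
`Tr B₊` by at least that amount unless the result is `0`. Dividing by `E_γ(ρ‖σ) ≤ 1` bounds the
contraction coefficient.
-/

open scoped BigOperators ComplexOrder

/-- Trace of the positive part of a Hermitian matrix (0 if not Hermitian). -/
noncomputable def posPartTrace {n : Type*} [Fintype n] [DecidableEq n]
    (X : Matrix n n ℂ) : ℝ :=
  if h : X.IsHermitian then ∑ i, max (h.eigenvalues i) 0 else 0

/-- The quantum hockey-stick divergence `E_γ(ρ‖σ) = Tr[(ρ - γσ)₊]`. -/
noncomputable def hsDiv {n : Type*} [Fintype n] [DecidableEq n]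
    (γ : ℝ) (ρ σ : Matrix n n ℂ) : ℝ :=
  posPartTrace (ρ - (γ : ℂ) • σ)

/-- A density operator: positive semidefinite with unit trace. -/
def IsDensity {n : Type*} [Fintype n] [DecidableEq n] (ρ : Matrix n n ℂ) : Prop :=
  ρ.PosSemidef ∧ ρ.trace = 1

/-- Trace norm: the sum of the singular values. -/
noncomputable def traceNorm {n : Type*} [Fintype n] [DecidableEq n]
    (X : Matrix n n ℂ) : ℝ :=
  ∑ i, Real.sqrt ((Matrix.posSemidef_conjTranspose_mul_self X).isHermitian.eigenvalues i)

/-- Completely positive trace-preserving linear map. -/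
def IsCPTP {n m : Type*} [Fintype n] [DecidableEq n] [Fintype m] [DecidableEq m]
    (Φ : Matrix n n ℂ →ₗ[ℂ] Matrix m m ℂ) : Prop :=
  (∀ k : ℕ, ∀ X : Matrix (Fin k × n) (Fin k × n) ℂ, X.PosSemidef →
      (Matrix.of fun p q : Fin k × m =>
        Φ (Matrix.of fun i j => X (p.1, i) (q.1, j)) p.2 q.2).PosSemidef) ∧
  (∀ X, (Φ X).trace = X.trace)

/-- Contraction coefficient of a channel for the hockey-stick divergence. -/
noncomputable def contractionCoeff {n : Type*} [Fintype n] [DecidableEq n]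
    (γ : ℝ) (Φ : Matrix n n ℂ →ₗ[ℂ] Matrix n n ℂ) : ℝ :=
  sSup {x : ℝ | ∃ ρ σ : Matrix n n ℂ, IsDensity ρ ∧ IsDensity σ ∧
    0 < hsDiv γ ρ σ ∧ x = hsDiv γ (Φ ρ) (Φ σ) / hsDiv γ ρ σ}

/-- The depolarizing channel with parameter `p` acting on site `j` of a composite system
of `k` subsystems, each of dimension `D`:
`ρ ↦ (1-p) ρ + p (Tr_j ρ) ⊗_j (I/D)`. -/
noncomputable def depolSite (D k : ℕ) (p : ℝ) (j : Fin k) :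
    Matrix (Fin k → Fin D) (Fin k → Fin D) ℂ →ₗ[ℂ]
      Matrix (Fin k → Fin D) (Fin k → Fin D) ℂ where
  toFun X := Matrix.of fun a b =>
    (1 - (p : ℂ)) * X a b +
      ((p : ℂ) / D) * (if a j = b j then
        ∑ s : Fin D, X (Function.update a j s) (Function.update b j s) else 0)
  map_add' X Y := by
    ext a b
    by_cases h : a j = b j <;>
      simp [h, Matrix.add_apply, Finset.sum_add_distrib, mul_add] <;> ring
  map_smul' c X := by
    ext a b
    by_cases h : a j = b j <;>
      simp [h, Matrix.smul_apply, Finset.mul_sum, smul_eq_mul, mul_add] <;> ring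

/-- The `k`-fold tensor power `D_p^{⊗k}` of the depolarizing channel, realized as the
composition of the single-site depolarizing channels on all `k` sites. -/
noncomputable def depolPow (D k : ℕ) (p : ℝ) :
    Matrix (Fin k → Fin D) (Fin k → Fin D) ℂ →ₗ[ℂ]
      Matrix (Fin k → Fin D) (Fin k → Fin D) ℂ :=
  (List.finRange k).foldl (fun acc j => depolSite D k p j ∘ₗ acc) LinearMap.id

open scoped MatrixOrder
open Matrix

section Channels

variable {n : Type*}

noncomputable def mixId (p : ℝ) (Φ : Module.End ℂ (Matrix n n ℂ)) :
    Module.End ℂ (Matrix n n ℂ) :=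
  (1 - (p : ℂ)) • 1 + (p : ℂ) • Φ

lemma mixId_apply (p : ℝ) (Φ : Module.End ℂ (Matrix n n ℂ)) (X : Matrix n n ℂ) :
    mixId p Φ X = ((1 - p : ℝ) : ℂ) • X + (p : ℂ) • Φ X := by
  simp [mixId]

variable [Fintype n]

structure IsPosTracePreserving (Φ : Module.End ℂ (Matrix n n ℂ)) : Prop where
  posSemidef_map : ∀ M : Matrix n n ℂ, M.PosSemidef → (Φ M).PosSemidef
  trace_map : ∀ M : Matrix n n ℂ, (Φ M).trace = M.trace

namespace IsPosTracePreserving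

lemma one : IsPosTracePreserving (1 : Module.End ℂ (Matrix n n ℂ)) :=
  ⟨fun _ hM => hM, fun _ => rfl⟩

lemma mul {Φ Ψ : Module.End ℂ (Matrix n n ℂ)} (hΦ : IsPosTracePreserving Φ)
    (hΨ : IsPosTracePreserving Ψ) : IsPosTracePreserving (Φ * Ψ) :=
  ⟨fun M hM => hΦ.posSemidef_map _ (hΨ.posSemidef_map M hM),
    fun M => (hΦ.trace_map _).trans (hΨ.trace_map M)⟩

lemma list_prod {Φs : List (Module.End ℂ (Matrix n n ℂ))}
    (h : ∀ Φ ∈ Φs, IsPosTracePreserving Φ) : IsPosTracePreserving Φs.prod := by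
  induction Φs with
  | nil => exact one
  | cons Φ Φs ih =>
    rw [List.prod_cons]
    exact (h Φ List.mem_cons_self).mul (ih fun Ψ hΨ => h Ψ (List.mem_cons_of_mem Φ hΨ))

lemma mixId {p : ℝ} (hp0 : 0 ≤ p) (hp1 : p ≤ 1) {Φ : Module.End ℂ (Matrix n n ℂ)}
    (hΦ : IsPosTracePreserving Φ) : IsPosTracePreserving (mixId p Φ) := by
  refine ⟨fun M hM => ?_, fun M => ?_⟩
  · rw [mixId_apply]
    exact (hM.smul (Complex.zero_le_real.2 (by linarith))).add
      ((hΦ.posSemidef_map M hM).smul (Complex.zero_le_real.2 hp0))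
  · rw [mixId_apply, trace_add, trace_smul, trace_smul, hΦ.trace_map, smul_eq_mul, smul_eq_mul]
    push_cast
    ring

end IsPosTracePreserving

lemma isPosTracePreserving_list_prod_map_mixId {p : ℝ} (hp0 : 0 ≤ p) (hp1 : p ≤ 1)
    {Φs : List (Module.End ℂ (Matrix n n ℂ))} (hΦs : ∀ Φ ∈ Φs, IsPosTracePreserving Φ) :
    IsPosTracePreserving (Φs.map (mixId p)).prod :=
  IsPosTracePreserving.list_prod fun Ψ hΨ => by
    obtain ⟨Φ, hΦ, rfl⟩ := List.mem_map.mp hΨ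
    exact (hΦs Φ hΦ).mixId hp0 hp1

end Channels

section PositivePart

variable {n : Type*} [Fintype n] [DecidableEq n]

lemma re_trace_mul_nonneg {P M : Matrix n n ℂ} (hP : P.PosSemidef) (hM : M.PosSemidef) :
    0 ≤ (P * M).trace.re := by
  have hcycle : (P * M).trace = (CFC.sqrt P * M * CFC.sqrt P).trace := by
    conv_lhs => rw [← CFC.sqrt_mul_sqrt_self P hP.nonneg]
    rw [mul_assoc, trace_mul_comm, mul_assoc]
  have hconj : (CFC.sqrt P * M * CFC.sqrt P).PosSemidef := by
    simpa only [(CFC.sqrt_nonneg P).posSemidef.1.eq] using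
      hM.mul_mul_conjTranspose_same (CFC.sqrt P)
  rw [hcycle]
  exact (Complex.nonneg_iff.mp hconj.trace_nonneg).1

lemma re_trace_mul_le_re_trace {P A : Matrix n n ℂ} (hP : (1 - P).PosSemidef)
    (hA : A.PosSemidef) : (P * A).trace.re ≤ A.trace.re := by
  have := re_trace_mul_nonneg hP hA
  rw [Matrix.sub_mul, one_mul, trace_sub, Complex.sub_re] at this
  linarith

lemma trace_cfc {X : Matrix n n ℂ} (hX : X.IsHermitian) (f : ℝ → ℝ) :
    (cfc f X).trace = ∑ i, (f (hX.eigenvalues i) : ℂ) := by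
  rw [hX.cfc_eq, IsHermitian.cfc, Unitary.conjStarAlgAut_apply, trace_mul_cycle,
    Unitary.coe_star_mul_self, one_mul, trace_diagonal]
  rfl

lemma posSemidef_cfc (X : Matrix n n ℂ) {f : ℝ → ℝ} (hf : ∀ x, 0 ≤ f x) :
    (cfc f X).PosSemidef :=
  nonneg_iff_posSemidef.mp (cfc_nonneg fun x _ => hf x)

lemma posPartTrace_nonneg (X : Matrix n n ℂ) : 0 ≤ posPartTrace X := by
  unfold posPartTrace
  split_ifs
  exacts [Finset.sum_nonneg fun i _ => le_max_right _ _, le_rfl]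

lemma re_trace_posPart {X : Matrix n n ℂ} (hX : X.IsHermitian) :
    (X⁺).trace.re = posPartTrace X := by
  rw [CFC.posPart_def, cfcₙ_eq_cfc, trace_cfc hX, posPartTrace, dif_pos hX, Complex.re_sum]
  rfl

noncomputable def posProj (X : Matrix n n ℂ) : Matrix n n ℂ :=
  cfc (fun x : ℝ => if 0 < x then (1 : ℝ) else 0) X

lemma posSemidef_posProj (X : Matrix n n ℂ) : (posProj X).PosSemidef :=
  posSemidef_cfc X fun x => by split_ifs <;> norm_num

lemma posSemidef_one_sub_posProj {X : Matrix n n ℂ} (hX : X.IsHermitian) :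
    (1 - posProj X).PosSemidef := by
  rw [posProj, ← cfc_one ℝ X, ← cfc_sub _ _ X (finite_real_spectrum.continuousOn _)
    (finite_real_spectrum.continuousOn _)]
  exact posSemidef_cfc X fun x => by simp only [Pi.one_apply]; split_ifs <;> norm_num

lemma re_trace_posProj_mul_self {X : Matrix n n ℂ} (hX : X.IsHermitian) :
    (posProj X * X).trace.re = posPartTrace X := by
  rw [posProj]
  nth_rw 2 [← cfc_id' ℝ X hX.isSelfAdjoint]
  rw [← cfc_mul _ _ X (finite_real_spectrum.continuousOn _)
    (finite_real_spectrum.continuousOn _), trace_cfc hX, posPartTrace, dif_pos hX, Complex.re_sum]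
  refine Finset.sum_congr rfl fun i _ => ?_
  split_ifs with h
  · simp [h.le]
  · simp [not_lt.mp h]

lemma one_le_re_trace_posProj {X : Matrix n n ℂ} (hX : X.IsHermitian)
    (hpos : 0 < posPartTrace X) : 1 ≤ (posProj X).trace.re := by
  rw [posPartTrace, dif_pos hX] at hpos
  obtain ⟨i, -, hi⟩ := Finset.exists_lt_of_sum_lt (s := Finset.univ) (f := fun _ => (0 : ℝ))
    (by simpa using hpos)
  have hi' : 0 < hX.eigenvalues i := by simpa using hi
  rw [posProj, trace_cfc hX, Complex.re_sum]
  calc (1 : ℝ) = (if 0 < hX.eigenvalues i then (1 : ℝ) else 0) := (if_pos hi').symm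
    _ ≤ _ := Finset.single_le_sum (f := fun i => (if 0 < hX.eigenvalues i then (1 : ℝ) else 0))
          (fun j _ => by positivity) (Finset.mem_univ i)

lemma re_trace_mul_le_posPartTrace {P X : Matrix n n ℂ} (hP : P.PosSemidef)
    (hP1 : (1 - P).PosSemidef) (hX : X.IsHermitian) :
    (P * X).trace.re ≤ posPartTrace X := by
  have hpos := nonneg_iff_posSemidef.mp (CFC.posPart_nonneg X)
  have hneg := nonneg_iff_posSemidef.mp (CFC.negPart_nonneg X)
  conv_lhs => rw [← CFC.posPart_sub_negPart X hX]
  rw [Matrix.mul_sub, trace_sub, Complex.sub_re, ← re_trace_posPart hX]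
  linarith [re_trace_mul_le_re_trace hP1 hpos, re_trace_mul_nonneg hP hneg]

lemma posPartTrace_sub_le {A B : Matrix n n ℂ} (hA : A.PosSemidef) (hB : B.PosSemidef) :
    posPartTrace (A - B) ≤ A.trace.re := by
  have hX : (A - B).IsHermitian := hA.1.sub hB.1
  rw [← re_trace_posProj_mul_self hX, Matrix.mul_sub, trace_sub, Complex.sub_re]
  linarith [re_trace_mul_le_re_trace (posSemidef_one_sub_posProj hX) hA,
    re_trace_mul_nonneg (posSemidef_posProj (A - B)) hB]

lemma posPartTrace_smul_add_smul_le {a b : ℝ} (ha : 0 ≤ a) (hb : 0 ≤ b) {X Y : Matrix n n ℂ}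
    (hX : X.IsHermitian) (hY : Y.IsHermitian) :
    posPartTrace ((a : ℂ) • X + (b : ℂ) • Y) ≤ a * posPartTrace X + b * posPartTrace Y := by
  have hZ : ((a : ℂ) • X + (b : ℂ) • Y).IsHermitian :=
    (hX.smul (Complex.conj_ofReal a)).add (hY.smul (Complex.conj_ofReal b))
  set P := posProj ((a : ℂ) • X + (b : ℂ) • Y)
  have hP := posSemidef_posProj ((a : ℂ) • X + (b : ℂ) • Y)
  have hP1 := posSemidef_one_sub_posProj hZ
  rw [← re_trace_posProj_mul_self hZ, Matrix.mul_add, Matrix.mul_smul, Matrix.mul_smul,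
    trace_add, trace_smul, trace_smul, Complex.add_re, smul_eq_mul, smul_eq_mul,
    Complex.re_ofReal_mul, Complex.re_ofReal_mul]
  gcongr
  exacts [re_trace_mul_le_posPartTrace hP hP1 hX, re_trace_mul_le_posPartTrace hP hP1 hY]

lemma posPartTrace_zero : posPartTrace (0 : Matrix n n ℂ) = 0 := by
  have := posPartTrace_sub_le (PosSemidef.zero (n := n) (R := ℂ)) PosSemidef.zero
  simp only [sub_zero, trace_zero, Complex.zero_re] at this
  exact this.antisymm (posPartTrace_nonneg 0)

lemma posPartTrace_smul_one_add_le {c : ℝ} (hc : c ≤ 0) {B : Matrix n n ℂ}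
    (hB : B.IsHermitian) :
    posPartTrace ((c : ℂ) • 1 + B) ≤ max 0 (c + posPartTrace B) := by
  set X := (c : ℂ) • (1 : Matrix n n ℂ) + B
  have hX : X.IsHermitian := (isHermitian_one.smul (Complex.conj_ofReal c)).add hB
  rcases (posPartTrace_nonneg X).eq_or_lt with hzero | hpos
  · exact hzero ▸ le_max_left _ _
  · have htr := one_le_re_trace_posProj hX hpos
    have hPB := re_trace_mul_le_posPartTrace (posSemidef_posProj X)
      (posSemidef_one_sub_posProj hX) hB
    rw [← re_trace_posProj_mul_self hX]
    refine le_max_of_le_right ?_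
    simp only [X, Matrix.mul_add, Matrix.mul_smul, mul_one, trace_add, trace_smul,
      Complex.add_re, smul_eq_mul, Complex.re_ofReal_mul]
    nlinarith

lemma IsPosTracePreserving.isHermitian_map {Φ : Module.End ℂ (Matrix n n ℂ)}
    (hΦ : IsPosTracePreserving Φ) {X : Matrix n n ℂ} (hX : X.IsHermitian) :
    (Φ X).IsHermitian := by
  rw [← CFC.posPart_sub_negPart X hX, map_sub]
  exact (hΦ.posSemidef_map _ (nonneg_iff_posSemidef.mp (CFC.posPart_nonneg X))).1.sub
    (hΦ.posSemidef_map _ (nonneg_iff_posSemidef.mp (CFC.negPart_nonneg X))).1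

lemma IsPosTracePreserving.posPartTrace_map_le {Φ : Module.End ℂ (Matrix n n ℂ)}
    (hΦ : IsPosTracePreserving Φ) {X : Matrix n n ℂ} (hX : X.IsHermitian) :
    posPartTrace (Φ X) ≤ posPartTrace X := by
  have h := posPartTrace_sub_le
    (hΦ.posSemidef_map _ (nonneg_iff_posSemidef.mp (CFC.posPart_nonneg X)))
    (hΦ.posSemidef_map _ (nonneg_iff_posSemidef.mp (CFC.negPart_nonneg X)))
  rwa [← map_sub, CFC.posPart_sub_negPart X hX, hΦ.trace_map, re_trace_posPart hX] at h

lemma posPartTrace_list_prod_mixId_sub_le {p : ℝ} (hp0 : 0 ≤ p) (hp1 : p ≤ 1)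
    {Φs : List (Module.End ℂ (Matrix n n ℂ))} (hΦs : ∀ Φ ∈ Φs, IsPosTracePreserving Φ)
    {X : Matrix n n ℂ} (hX : X.IsHermitian) :
    posPartTrace ((Φs.map (mixId p)).prod X - ((p ^ Φs.length : ℝ) : ℂ) • Φs.prod X) ≤
      (1 - p ^ Φs.length) * posPartTrace X := by
  induction Φs with
  | nil => simp [posPartTrace_zero]
  | cons Φ Φs ih =>
    have hΦ := hΦs Φ List.mem_cons_self
    have hΦs' := fun Ψ hΨ => hΦs Ψ (List.mem_cons_of_mem Φ hΨ)
    set Ψ := (Φs.map (mixId p)).prod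
    have hΨ : IsPosTracePreserving Ψ := isPosTracePreserving_list_prod_map_mixId hp0 hp1 hΦs'
    set B := Ψ X - ((p ^ Φs.length : ℝ) : ℂ) • Φs.prod X
    have hB : B.IsHermitian := (hΨ.isHermitian_map hX).sub
      (((IsPosTracePreserving.list_prod hΦs').isHermitian_map hX).smul (Complex.conj_ofReal _))
    have hsplit : ((Φ :: Φs).map (mixId p)).prod X -
        ((p ^ (Φ :: Φs).length : ℝ) : ℂ) • (Φ :: Φs).prod X =
        ((1 - p : ℝ) : ℂ) • Ψ X + (p : ℂ) • Φ B := by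
      simp only [B, List.map_cons, List.prod_cons, List.length_cons, Module.End.mul_apply,
        mixId_apply, map_sub, map_smul]
      push_cast
      module
    rw [hsplit]
    calc _ ≤ (1 - p) * posPartTrace (Ψ X) + p * posPartTrace (Φ B) :=
          posPartTrace_smul_add_smul_le (by linarith) hp0 (hΨ.isHermitian_map hX)
            (hΦ.isHermitian_map hB)
      _ ≤ (1 - p) * posPartTrace X + p * ((1 - p ^ Φs.length) * posPartTrace X) :=
          add_le_add (mul_le_mul_of_nonneg_left (hΨ.posPartTrace_map_le hX) (by linarith))
            (mul_le_mul_of_nonneg_left ((hΦ.posPartTrace_map_le hB).trans (ih hΦs')) hp0)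
      _ = (1 - p ^ (Φ :: Φs).length) * posPartTrace X := by
          rw [List.length_cons, pow_succ]; ring

end PositivePart

section Depolarizing

variable {D k : ℕ}

lemma depolSite_one_apply (j : Fin k) (X : Matrix (Fin k → Fin D) (Fin k → Fin D) ℂ)
    (a b : Fin k → Fin D) :
    depolSite D k 1 j X a b = (D : ℂ)⁻¹ *
      if a j = b j then ∑ s, X (Function.update a j s) (Function.update b j s) else 0 := by
  simp [depolSite]

/-- The matrix unit `|s⟩⟨t|` on site `j`, tensored with the identity on the other sites. -/
def siteUnit (j : Fin k) (s t : Fin D) : Matrix (Fin k → Fin D) (Fin k → Fin D) ℂ :=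
  Matrix.of fun a b => if a j = s ∧ b = Function.update a j t then 1 else 0

lemma siteUnit_mul_mul_conjTranspose_apply (j : Fin k) (s t : Fin D)
    (X : Matrix (Fin k → Fin D) (Fin k → Fin D) ℂ) (a b : Fin k → Fin D) :
    (siteUnit j s t * X * (siteUnit j s t)ᴴ) a b =
      if a j = s ∧ b j = s then X (Function.update a j t) (Function.update b j t) else 0 := by
  simp only [mul_apply, siteUnit, conjTranspose_apply, of_apply]
  by_cases ha : a j = s <;> by_cases hb : b j = s <;> simp [ha, hb]

lemma depolSite_one_eq_sum (j : Fin k) (X : Matrix (Fin k → Fin D) (Fin k → Fin D) ℂ) :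
    depolSite D k 1 j X =
      (D : ℂ)⁻¹ • ∑ s, ∑ t, siteUnit j s t * X * (siteUnit j s t)ᴴ := by
  ext a b
  simp only [depolSite_one_apply, Matrix.smul_apply, Matrix.sum_apply,
    siteUnit_mul_mul_conjTranspose_apply, smul_eq_mul]
  rw [Finset.sum_comm]
  congr 1
  by_cases h : a j = b j
  · simp [h]
  · simp only [h, if_false]
    refine (Finset.sum_eq_zero fun _ _ => Finset.sum_eq_zero fun _ _ => ?_).symm
    exact if_neg fun hs => h (hs.1.trans hs.2.symm)

lemma sum_sum_update {M : Type*} [AddCommMonoid M] (f : (Fin k → Fin D) → M) (j : Fin k) :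
    ∑ s : Fin D, ∑ a, f (Function.update a j s) = D • ∑ a, f a := by
  have hinv : Function.Involutive
      fun x : Fin D × (Fin k → Fin D) => (x.2 j, Function.update x.2 j x.1) := by
    intro x
    simp
  have key := hinv.bijective.sum_comp fun x => f x.2
  simp only [Fintype.sum_prod_type] at key
  rw [key, Finset.sum_const, Finset.card_univ, Fintype.card_fin]

lemma trace_depolSite_one (j : Fin k) (X : Matrix (Fin k → Fin D) (Fin k → Fin D) ℂ) :
    (depolSite D k 1 j X).trace = X.trace := by
  rcases Nat.eq_zero_or_pos D with rfl | hD
  · have : IsEmpty (Fin k → Fin 0) := ⟨fun a => (a j).elim0⟩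
    simp [Matrix.trace]
  · simp only [Matrix.trace, diag, depolSite_one_apply, if_true, ← Finset.mul_sum]
    rw [Finset.sum_comm, sum_sum_update (fun a => X a a) j, nsmul_eq_mul,
      inv_mul_cancel_left₀ (by exact_mod_cast hD.ne')]

lemma isPosTracePreserving_depolSite_one (j : Fin k) :
    IsPosTracePreserving (depolSite D k 1 j) := by
  refine ⟨fun M hM => ?_, trace_depolSite_one j⟩
  rw [depolSite_one_eq_sum]
  refine PosSemidef.smul ?_ (by positivity)
  exact Finset.sum_induction _ PosSemidef (fun _ _ => PosSemidef.add) PosSemidef.zero fun s _ =>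
    Finset.sum_induction _ PosSemidef (fun _ _ => PosSemidef.add) PosSemidef.zero fun t _ =>
      hM.mul_mul_conjTranspose_same _

lemma depolSite_eq_mixId (p : ℝ) (j : Fin k) :
    depolSite D k p j = mixId p (depolSite D k 1 j) := by
  ext X a b
  rw [mixId_apply, Matrix.add_apply, Matrix.smul_apply, Matrix.smul_apply, depolSite_one_apply]
  simp only [depolSite, LinearMap.coe_mk, AddHom.coe_mk, of_apply, smul_eq_mul]
  push_cast
  ring

def patch (l : List (Fin k)) (a f : Fin k → Fin D) : Fin k → Fin D :=
  fun i => if i ∈ l then f i else a i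

@[simp]
lemma patch_nil (a f : Fin k → Fin D) : patch [] a f = a := rfl

lemma patch_update {l : List (Fin k)} {j : Fin k} (hj : j ∉ l) (a f : Fin k → Fin D)
    (s : Fin D) :
    patch l (Function.update a j s) f = patch (j :: l) a (Function.update f j s) := by
  funext i
  by_cases hij : i = j
  · subst hij
    simp [patch, hj]
  · simp [patch, hij]

/- Summing over all of `f`, not only over its entries on `l`, overcounts by `D ^ (k - l.length)`;
the factor `(D ^ k)⁻¹` absorbs this, so the formula needs no subtraction of lengths. -/
lemma list_prod_depolSite_one_apply {l : List (Fin k)} (hl : l.Nodup)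
    (X : Matrix (Fin k → Fin D) (Fin k → Fin D) ℂ) (a b : Fin k → Fin D) :
    (l.map (depolSite D k 1)).prod X a b =
      if ∀ j ∈ l, a j = b j then
        ((D : ℂ) ^ k)⁻¹ * ∑ f, X (patch l a f) (patch l b f) else 0 := by
  induction l generalizing a b with
  | nil =>
    have hcard : ((D : ℂ) ^ k) ≠ 0 := by
      have : Nonempty (Fin k → Fin D) := ⟨a⟩
      have := Fintype.card_ne_zero (α := Fin k → Fin D)
      rw [Fintype.card_fun, Fintype.card_fin, Fintype.card_fin] at this
      exact_mod_cast this
    simp only [List.map_nil, List.prod_nil, Module.End.one_apply, List.not_mem_nil,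
      IsEmpty.forall_iff, implies_true, if_true, patch_nil, Finset.sum_const, Finset.card_univ,
      Fintype.card_fun, Fintype.card_fin, nsmul_eq_mul]
    push_cast
    rw [inv_mul_cancel_left₀ hcard]
  | cons j l ih =>
    obtain ⟨hjl, hl⟩ := List.nodup_cons.mp hl
    have hD : (D : ℂ) ≠ 0 := by exact_mod_cast (a j).pos.ne'
    have hcond (s : Fin D) : (∀ i ∈ l, Function.update a j s i = Function.update b j s i) ↔
        ∀ i ∈ l, a i = b i := by
      refine forall₂_congr fun i hi => ?_
      have hij : i ≠ j := fun h => hjl (h ▸ hi)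
      rw [Function.update_of_ne hij, Function.update_of_ne hij]
    simp only [List.map_cons, List.prod_cons, Module.End.mul_apply, depolSite_one_apply,
      ih hl, hcond, patch_update hjl, List.forall_mem_cons]
    by_cases hc : ∀ i ∈ l, a i = b i
    · simp only [if_pos hc, and_iff_left hc, ← Finset.mul_sum]
      split_ifs
      · rw [sum_sum_update (fun f => X (patch (j :: l) a f) (patch (j :: l) b f)) j,
          nsmul_eq_mul, mul_left_comm, inv_mul_cancel_left₀ hD]
      · rw [mul_zero]
    · simp [hc]

lemma list_prod_depolSite_one_of_nodup_of_forall_mem {l : List (Fin k)} (hl : l.Nodup)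
    (hmem : ∀ j, j ∈ l) (X : Matrix (Fin k → Fin D) (Fin k → Fin D) ℂ) :
    (l.map (depolSite D k 1)).prod X = (X.trace / (D : ℂ) ^ k) • 1 := by
  ext a b
  have hpatch (c : Fin k → Fin D) : patch l c = id := by
    funext f i
    simp [patch, hmem]
  have hcond : (∀ j ∈ l, a j = b j) ↔ a = b := ⟨fun h => funext fun j => h j (hmem j), by
    rintro rfl _ _; rfl⟩
  rw [list_prod_depolSite_one_apply hl, if_congr hcond rfl rfl, Matrix.smul_apply, one_apply]
  simp only [hpatch, id]
  split_ifs
  · rw [smul_eq_mul, mul_one, div_eq_inv_mul]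
    rfl
  · rw [smul_zero]

end Depolarizing

lemma List.foldl_mul_left_eq_prod_reverse {M ι : Type*} [Monoid M] (f : ι → M) (l : List ι)
    (a : M) : l.foldl (fun acc j => f j * acc) a = (l.reverse.map f).prod * a := by
  induction l generalizing a with
  | nil => simp
  | cons j l ih => simp [ih, mul_assoc]

lemma depolPow_eq_list_prod (D k : ℕ) (p : ℝ) :
    depolPow D k p = ((List.finRange k).reverse.map (depolSite D k p)).prod :=
  (List.foldl_mul_left_eq_prod_reverse _ _ 1).trans (mul_one _)

section HockeyStick

variable {n : Type*} [Fintype n] [DecidableEq n]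

lemma hsDiv_le_one {γ : ℝ} (hγ : 0 ≤ γ) {ρ σ : Matrix n n ℂ} (hρ : IsDensity ρ)
    (hσ : IsDensity σ) : hsDiv γ ρ σ ≤ 1 := by
  have h := posPartTrace_sub_le hρ.1 (hσ.1.smul (Complex.zero_le_real.2 hγ))
  rwa [hρ.2, Complex.one_re] at h

lemma contractionCoeff_le_of_forall_hsDiv_le {Φ : Matrix n n ℂ →ₗ[ℂ] Matrix n n ℂ}
    {γ c q : ℝ} (hγ : 0 ≤ γ) (hc : c ≤ 0)
    (h : ∀ ρ σ : Matrix n n ℂ, IsDensity ρ → IsDensity σ →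
      hsDiv γ (Φ ρ) (Φ σ) ≤ max 0 (c + q * hsDiv γ ρ σ)) :
    contractionCoeff γ Φ ≤ max 0 (c + q) := by
  refine Real.sSup_le ?_ (le_max_left _ _)
  rintro _ ⟨ρ, σ, hρ, hσ, hE, rfl⟩
  set E := hsDiv γ ρ σ
  have hcE : c / E ≤ c := by
    rw [div_le_iff₀ hE]
    nlinarith [hsDiv_le_one hγ hρ hσ]
  calc hsDiv γ (Φ ρ) (Φ σ) / E ≤ max 0 (c + q * E) / E := by gcongr; exact h ρ σ hρ hσ
    _ = max 0 (c / E + q) := by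
      rw [← max_div_div_right hE.le, zero_div, add_div, mul_div_cancel_right₀ _ hE.ne']
    _ ≤ max 0 (c + q) := by gcongr

end HockeyStick

lemma one_sub_mul_pow_div_pow_nonpos {γ p : ℝ} (hγ : 1 ≤ γ) (hp0 : 0 ≤ p) (D k : ℕ) :
    (1 - γ) * p ^ k / (D : ℝ) ^ k ≤ 0 :=
  div_nonpos_of_nonpos_of_nonneg
    (mul_nonpos_of_nonpos_of_nonneg (by linarith) (pow_nonneg hp0 k)) (by positivity)

theorem hsDiv_depolPow_le {D k : ℕ} {p γ : ℝ} (hp0 : 0 ≤ p) (hp1 : p ≤ 1) (hγ : 1 ≤ γ)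
    {ρ σ : Matrix (Fin k → Fin D) (Fin k → Fin D) ℂ} (hρ : IsDensity ρ) (hσ : IsDensity σ) :
    hsDiv γ (depolPow D k p ρ) (depolPow D k p σ) ≤
      max 0 ((1 - γ) * p ^ k / (D : ℝ) ^ k + (1 - p ^ k) * hsDiv γ ρ σ) := by
  set Rs := (List.finRange k).reverse.map (depolSite D k 1)
  have hRs : ∀ R ∈ Rs, IsPosTracePreserving R := by
    simpa [Rs] using fun j => isPosTracePreserving_depolSite_one j
  have hpow : depolPow D k p = (Rs.map (mixId p)).prod := by
    rw [depolPow_eq_list_prod, List.map_map]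
    exact congrArg _ (List.map_congr_left fun j _ => depolSite_eq_mixId p j)
  have hlen : Rs.length = k := by simp [Rs]
  set Δ := ρ - (γ : ℂ) • σ
  have hΔ : Δ.IsHermitian := hρ.1.1.sub (hσ.1.1.smul (Complex.conj_ofReal γ))
  set c := (1 - γ) * p ^ k / (D : ℝ) ^ k
  have hc : c ≤ 0 := one_sub_mul_pow_div_pow_nonpos hγ hp0 D k
  have hfull : ((p ^ k : ℝ) : ℂ) • Rs.prod Δ = (c : ℂ) • 1 := by
    have htr : Δ.trace = 1 - γ := by
      rw [trace_sub, trace_smul, hρ.2, hσ.2, smul_eq_mul, mul_one]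
    rw [list_prod_depolSite_one_of_nodup_of_forall_mem
      (List.nodup_reverse.mpr (List.nodup_finRange k))
      (fun j => List.mem_reverse.mpr (List.mem_finRange j)), htr, smul_smul]
    congr 1
    push_cast [c]
    ring
  set B := (Rs.map (mixId p)).prod Δ - ((p ^ k : ℝ) : ℂ) • Rs.prod Δ
  have hB : B.IsHermitian :=
    ((isPosTracePreserving_list_prod_map_mixId hp0 hp1 hRs).isHermitian_map hΔ).sub
      (((IsPosTracePreserving.list_prod hRs).isHermitian_map hΔ).smul (Complex.conj_ofReal _))
  calc hsDiv γ (depolPow D k p ρ) (depolPow D k p σ) = posPartTrace ((c : ℂ) • 1 + B) := by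
        rw [← hfull, add_sub_cancel, hsDiv, ← map_smul, ← map_sub, hpow]
    _ ≤ max 0 (c + posPartTrace B) := posPartTrace_smul_one_add_le hc hB
    _ ≤ max 0 (c + (1 - p ^ k) * hsDiv γ ρ σ) := by
        gcongr
        have h := posPartTrace_list_prod_mixId_sub_le hp0 hp1 hRs hΔ
        rwa [hlen] at h

/-- Hockey-stick divergence under local depolarizing noise `D_p^{⊗k}`, and the resulting
bound on its contraction coefficient. -/
theorem hsDiv_depolPow (D k : ℕ) (p γ : ℝ) (hp0 : 0 ≤ p) (hp1 : p ≤ 1) (hγ : 1 ≤ γ) :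
    (∀ ρ σ : Matrix (Fin k → Fin D) (Fin k → Fin D) ℂ, IsDensity ρ → IsDensity σ →
      hsDiv γ (depolPow D k p ρ) (depolPow D k p σ) ≤
        max 0 ((1 - γ) * p ^ k / (D : ℝ) ^ k + (1 - p ^ k) * hsDiv γ ρ σ)) ∧
    contractionCoeff γ (depolPow D k p) ≤
      max 0 ((1 - γ) * p ^ k / (D : ℝ) ^ k + (1 - p ^ k)) := by
  have hbound : ∀ ρ σ : Matrix (Fin k → Fin D) (Fin k → Fin D) ℂ, IsDensity ρ → IsDensity σ → _ :=
    fun _ _ => hsDiv_depolPow_le hp0 hp1 hγ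
  exact ⟨hbound, contractionCoeff_le_of_forall_hsDiv_le (by linarith)
    (one_sub_mul_pow_div_pow_nonpos hγ hp0 D k) hbound⟩
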